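/- For all sufficiently large m, if r < 0.1·m then the sum k = ∑_{j=0}^{r} C(m, j) satisfies k² ≤ 0.2 · m · 2^m. -/
import Mathlib

theorem dimension_square_bound :
    ∃ M : ℕ, ∀ m ≥ M, ∀ r : ℕ, (r : ℝ) < 0.1 * m →
      ((∑ j ∈ Finset.range (r + 1), (m.choose j) : ℕ) : ℝ) ^ 2 ≤
        0.2 * m * 2 ^ m := by
  use 5
  intro m hm r hr
  have h10 : 10 * r < m := by
    have h : (10 * r : ℝ) < m := by push_cast at hr ⊢; nlinarith
    exact_mod_cast h
  have hrm : r ≤ m := by omega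
  set S : ℝ := ((∑ j ∈ Finset.range (r + 1), (m.choose j) : ℕ) : ℝ) with hSdef
  have hS0 : 0 ≤ S := by positivity
  have hsum1 : ∑ j ∈ Finset.range (m + 1),
      (1/9 : ℝ)^j * (8/9)^(m-j) * (m.choose j) = 1 := by
    have h := add_pow (1/9 : ℝ) (8/9) m
    norm_num at h
    rw [← h]
  have hw : ∀ j, j ≤ r → (1/9:ℝ)^r * (8/9)^(m-r) ≤ (1/9)^j * (8/9)^(m-j) := by
    intro j hj
    have h1 : (1/9:ℝ)^r = (1/9)^j * (1/9)^(r-j) := by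
      rw [← pow_add]; congr 1; omega
    have h2 : (8/9:ℝ)^(m-j) = (8/9)^(r-j) * (8/9)^(m-r) := by
      rw [← pow_add]; congr 1; omega
    rw [h1, h2, mul_assoc]
    have h3 : (1/9:ℝ)^(r-j) ≤ (8/9)^(r-j) := by
      apply pow_le_pow_left₀ (by norm_num) (by norm_num)
    have p1 : (0:ℝ) ≤ (1/9:ℝ)^j := by positivity
    have p2 : (0:ℝ) ≤ (8/9:ℝ)^(m-r) := by positivity
    exact mul_le_mul_of_nonneg_left (mul_le_mul_of_nonneg_right h3 p2) p1
  have hkey : S * ((1/9:ℝ)^r * (8/9)^(m-r)) ≤ 1 := by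
    rw [hSdef, Nat.cast_sum, Finset.sum_mul]
    calc ∑ j ∈ Finset.range (r+1), (m.choose j : ℝ) * ((1/9)^r * (8/9)^(m-r))
        ≤ ∑ j ∈ Finset.range (r+1), (1/9:ℝ)^j * (8/9)^(m-j) * (m.choose j) := by
          apply Finset.sum_le_sum
          intro j hj
          have hjr : j ≤ r := by simpa [Nat.lt_succ_iff] using hj
          have hc : (0:ℝ) ≤ (m.choose j : ℝ) := by positivity
          calc (m.choose j : ℝ) * ((1/9)^r * (8/9)^(m-r))
              ≤ (m.choose j : ℝ) * ((1/9)^j * (8/9)^(m-j)) :=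
                mul_le_mul_of_nonneg_left (hw j hjr) hc
            _ = (1/9:ℝ)^j * (8/9)^(m-j) * (m.choose j) := by ring
      _ ≤ ∑ j ∈ Finset.range (m+1), (1/9:ℝ)^j * (8/9)^(m-j) * (m.choose j) := by
          apply Finset.sum_le_sum_of_subset_of_nonneg
          · exact Finset.range_subset_range.2 (by omega)
          · intro j _ _; positivity
      _ = 1 := hsum1
  have hpos : (0:ℝ) < (1/9:ℝ)^r * (8/9)^(m-r) := by positivity
  have hprod : (8:ℝ)^r * (9/8)^m * ((1/9)^r * (8/9)^(m-r)) = 1 := by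
    have hm' : (9/8:ℝ)^m = (9/8)^r * (9/8)^(m-r) := by
      rw [← pow_add]; congr 1; omega
    rw [hm']
    calc (8:ℝ)^r * ((9/8)^r * (9/8)^(m-r)) * ((1/9)^r * (8/9)^(m-r))
        = ((8:ℝ) * (9/8) * (1/9))^r * ((9/8) * (8/9))^(m-r) := by
          rw [mul_pow, mul_pow, mul_pow]; ring
      _ = 1 := by norm_num
  have hSb : S ≤ 8^r * (9/8)^m := by
    have h := hkey.trans (le_of_eq hprod.symm)
    exact le_of_mul_le_mul_right h hpos
  have h20 : S ^ 20 ≤ ((0.2 * m * 2^m : ℝ)) ^ 10 := by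
    have hb : S ^ 20 ≤ (8^r * (9/8:ℝ)^m) ^ 20 :=
      pow_le_pow_left₀ hS0 hSb 20
    have he : ((8:ℝ)^r * (9/8)^m) ^ 20 = (64:ℝ)^(10*r) * ((9/8)^20)^m := by
      rw [mul_pow, ← pow_mul, ← pow_mul, show (64:ℝ) = 8^2 by norm_num,
        ← pow_mul, ← pow_mul, show 2*(10*r) = r*20 by ring, show 20*m = m*20 by ring]
    have h64 : (64:ℝ)^(10*r) ≤ 64^m := by
      apply pow_le_pow_right₀ (by norm_num) (by omega)
    have hc : (64:ℝ) * ((9/8)^20) ≤ 1024 := by norm_num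
    have hstep : (64:ℝ)^(10*r) * ((9/8)^20)^m ≤ (1024:ℝ)^m := by
      calc (64:ℝ)^(10*r) * ((9/8)^20)^m ≤ 64^m * ((9/8)^20)^m := by
            have hp : (0:ℝ) ≤ ((9/8:ℝ)^20)^m := by positivity
            nlinarith
        _ = (64 * (9/8)^20)^m := by rw [← mul_pow]
        _ ≤ 1024^m := pow_le_pow_left₀ (by positivity) hc m
    have hm1 : (1:ℝ) ≤ 0.2 * m := by
      have : (5:ℝ) ≤ m := by exact_mod_cast hm
      linarith
    have h1024 : (1024:ℝ)^m = ((2:ℝ)^m)^10 := by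
      rw [← pow_mul, show (1024:ℝ) = 2^10 by norm_num, ← pow_mul, Nat.mul_comm]
    have hfin : (1024:ℝ)^m ≤ (0.2 * m * 2^m) ^ 10 := by
      rw [h1024, mul_pow]
      have h2 : (0:ℝ) ≤ ((2:ℝ)^m)^10 := by positivity
      nlinarith [one_le_pow₀ hm1 (n := 10)]
    calc S ^ 20 ≤ (8^r * (9/8:ℝ)^m) ^ 20 := hb
      _ = (64:ℝ)^(10*r) * ((9/8)^20)^m := he
      _ ≤ (1024:ℝ)^m := hstep
      _ ≤ (0.2 * m * 2^m) ^ 10 := hfin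
  have hrhs0 : (0:ℝ) ≤ 0.2 * m * 2^m := by positivity
  have hp10 : (S^2)^10 ≤ ((0.2 * m * 2^m : ℝ))^10 := by
    rw [← pow_mul]; exact h20
  exact (pow_le_pow_iff_left₀ (by positivity) hrhs0 (by norm_num)).1 hp10
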